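/- arXiv:2206.13090 — 6 statements merged into one kernel-verified Lean document; each statement's English description precedes it below -/
import Mathlib

section
/- Let φ₁,…,φ_m : ℝ^d → ℝ be convex functions and C₀ ⊆ ℝ^d a compact convex set such that there exists z ∈ C₀ with φ_j(z) < 0 for all j. Set C = C₀ ∩ {x : φ_j(x) ≤ 0 for all j}. Then there exists a constant γ > 0 such that for every x ∈ C₀ with max_j φ_j(x) > 0, dist(x, C) ≤ γ · max_{j ∈ [m]} φ_j(x). -/
/-- Error bound with a Slater point on a compact convex set (Lemma 3.1 of the paper). -/
theorem slater_error_bound {d m : ℕ} (hm : 0 < m)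
    (φ : Fin m → EuclideanSpace ℝ (Fin d) → ℝ)
    (hconv : ∀ j, ConvexOn ℝ Set.univ (φ j))
    (C0 : Set (EuclideanSpace ℝ (Fin d))) (hC0c : IsCompact C0) (hC0v : Convex ℝ C0)
    (z : EuclideanSpace ℝ (Fin d)) (hz : z ∈ C0) (hzs : ∀ j, φ j z < 0) :
    ∃ γ > 0, ∀ x ∈ C0,
      0 < (Finset.univ.sup' (Finset.univ_nonempty_iff.mpr ⟨⟨0, hm⟩⟩) fun j => φ j x) →
      Metric.infDist x (C0 ∩ {y | ∀ j, φ j y ≤ 0}) ≤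
        γ * Finset.univ.sup' (Finset.univ_nonempty_iff.mpr ⟨⟨0, hm⟩⟩) fun j => φ j x := by
  have hne : (Finset.univ : Finset (Fin m)).Nonempty := Finset.univ_nonempty_iff.mpr ⟨⟨0, hm⟩⟩
  -- δ > 0 with φ j z ≤ -δ for all j
  set δ : ℝ := -(Finset.univ.sup' hne fun j => φ j z) with hδdef
  have hδpos : 0 < δ := by
    have : (Finset.univ.sup' hne fun j => φ j z) < 0 :=
      (Finset.sup'_lt_iff hne).mpr fun j _ => hzs j
    rw [hδdef]; linarith
  have hφz : ∀ j, φ j z ≤ -δ := fun j => by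
    rw [hδdef, neg_neg]
    exact Finset.le_sup' (fun j => φ j z) (Finset.mem_univ j)
  -- bound on C0
  obtain ⟨R, hR⟩ := hC0c.isBounded.subset_closedBall z
  have hR0 : 0 ≤ R := by
    have := hR hz; simpa using this
  refine ⟨(R + 1) / δ, by positivity, ?_⟩
  intro x hx ht
  set t : ℝ := Finset.univ.sup' hne fun j => φ j x with htdef
  have hφx : ∀ j, φ j x ≤ t := fun j => Finset.le_sup' (fun j => φ j x) (Finset.mem_univ j)
  set b : ℝ := t / (δ + t) with hbdef
  have hb0 : 0 < b := by positivity
  have hb1 : b < 1 := by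
    rw [hbdef, div_lt_one (by linarith)]; linarith
  set y : EuclideanSpace ℝ (Fin d) := x + b • (z - x) with hydef
  have hyconv : (1 - b) • x + b • z = y := by rw [hydef]; module
  have hyC0 : y ∈ C0 := by
    rw [← hyconv]
    exact hC0v hx hz (by linarith) hb0.le (by ring)
  have hyfeas : ∀ j, φ j y ≤ 0 := by
    intro j
    have := (hconv j).2 (Set.mem_univ x) (Set.mem_univ z)
      (by linarith : (0:ℝ) ≤ 1 - b) hb0.le (by ring : (1 - b) + b = 1)
    rw [hyconv] at this
    simp only [smul_eq_mul] at this
    have h1 : (1 - b) * φ j x ≤ (1 - b) * t :=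
      mul_le_mul_of_nonneg_left (hφx j) (by linarith)
    have h2 : b * φ j z ≤ b * (-δ) := mul_le_mul_of_nonneg_left (hφz j) hb0.le
    have hkey : (1 - b) * t + b * (-δ) = 0 := by
      rw [hbdef]; field_simp; ring
    linarith
  have hyC : y ∈ C0 ∩ {y | ∀ j, φ j y ≤ 0} := ⟨hyC0, hyfeas⟩
  have hdist : dist x y = b * dist x z := by
    have hxy : x - y = b • (x - z) := by rw [hydef]; module
    rw [dist_eq_norm, hxy, norm_smul, Real.norm_eq_abs, abs_of_pos hb0, dist_eq_norm]
  have hdxz : dist x z ≤ R := by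
    have := hR hx; simpa [Metric.mem_closedBall] using this
  calc Metric.infDist x (C0 ∩ {y | ∀ j, φ j y ≤ 0}) ≤ dist x y :=
        Metric.infDist_le_dist_of_mem hyC
    _ = b * dist x z := hdist
    _ ≤ (t / δ) * R := by
        apply mul_le_mul _ hdxz dist_nonneg (by positivity)
        rw [hbdef, div_le_div_iff₀ (by linarith) hδpos]
        nlinarith
    _ ≤ (R + 1) / δ * t := by
        rw [div_mul_eq_mul_div, div_mul_eq_mul_div, div_le_div_iff₀ hδpos hδpos]
        nlinarith
end

section
/- Let φ₁,…,φ_m : ℝ^d → ℝ be convex, C₀ compact convex, z ∈ C₀ with φ_j(z) < 0 for all j, and suppose every subgradient ξ ∈ ∂φ_j(x) with x ∈ C₀, j ∈ [m] satisfies ‖ξ‖ ≤ η for some η > 0. Set C = C₀ ∩ ⋂_j {x : φ_j(x) ≤ 0}. Then there exists κ > 0 such that for every x ∈ C₀, dist(x, C) ≤ κ · max_{j ∈ [m]} min_{ξ_j ∈ ∂φ_j(x)} dist(x, H(φ_j; x; ξ_j)), where H(φ; x; ξ) = {y : φ(x) + ⟨ξ, y - x⟩ ≤ 0} if ξ ≠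 0 and H(φ; x; ξ) = ℝ^d if ξ = 0. -/
open RealInnerProductSpace

/-- The subdifferential of `φ` at `x`. -/
def subgrad {d : ℕ} (φ : EuclideanSpace ℝ (Fin d) → ℝ) (x : EuclideanSpace ℝ (Fin d)) :
    Set (EuclideanSpace ℝ (Fin d)) :=
  {ξ | ∀ y, φ x + ⟪ξ, y - x⟫ ≤ φ y}

open Classical in
/-- The half-space outer approximation `H(φ; x; ξ)`. -/
noncomputable def Hset {d : ℕ} (φ : EuclideanSpace ℝ (Fin d) → ℝ)
    (x ξ : EuclideanSpace ℝ (Fin d)) : Set (EuclideanSpace ℝ (Fin d)) :=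
  if ξ = 0 then Set.univ else {y | φ x + ⟪ξ, y - x⟫ ≤ 0}

lemma subgrad_nonempty {d : ℕ} (φ : EuclideanSpace ℝ (Fin d) → ℝ)
    (hconv : ConvexOn ℝ Set.univ φ) (x : EuclideanSpace ℝ (Fin d)) :
    (subgrad φ x).Nonempty := by
  have hcont : Continuous φ := hconv.locallyLipschitz.continuous
  set s : Set (EuclideanSpace ℝ (Fin d) × ℝ) := {p | φ p.1 < p.2} with hs
  have hsopen : IsOpen s := isOpen_lt (hcont.comp continuous_fst) continuous_snd
  have hsconv : Convex ℝ s := by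
    intro p hp q hq a b ha hb hab
    simp only [hs, Set.mem_setOf_eq] at *
    have := hconv.2 (Set.mem_univ p.1) (Set.mem_univ q.1) ha hb hab
    refine this.trans_lt ?_
    rcases ha.eq_or_lt with rfl | ha'
    · simp only [zero_add] at hab; subst hab; simpa using hq
    rcases hb.eq_or_lt with rfl | hb'
    · simp only [add_zero] at hab; subst hab; simpa using hp
    have : a * φ p.1 + b * φ q.1 < a * p.2 + b * q.2 :=
      add_lt_add (by nlinarith) (by nlinarith)
    simpa [Prod.smul_def, smul_eq_mul] using this
  have hxs : (x, φ x) ∉ s := by simp [hs]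
  obtain ⟨f, hf⟩ := geometric_hahn_banach_open_point hsconv hsopen hxs
  set c : ℝ := f (0, 1) with hc
  have hxlin : ∀ (y : EuclideanSpace ℝ (Fin d)) (t : ℝ), f (y, t) = f (y, 0) + t * c := by
    intro y t
    have h1 : (y, t) = (y, (0:ℝ)) + t • ((0 : EuclideanSpace ℝ (Fin d)), (1:ℝ)) := by simp
    rw [h1, map_add, map_smul, smul_eq_mul]
  have hcneg : c < 0 := by
    have h1 := hf (x, φ x + 1) (by simp [hs])
    rw [hxlin x (φ x + 1), hxlin x (φ x)] at h1
    nlinarith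
  have hc0 : c ≠ 0 := ne_of_lt hcneg
  have key : ∀ y, f (y, 0) + φ y * c ≤ f (x, 0) + φ x * c := by
    intro y
    by_contra hcon
    push_neg at hcon
    set ε : ℝ := (f (y, 0) + φ y * c - (f (x, 0) + φ x * c)) / (-c) with hε
    have hεpos : 0 < ε := div_pos (by linarith) (by linarith)
    have h2 := hf (y, φ y + ε) (by simp [hs, hεpos])
    rw [hxlin y (φ y + ε), hxlin x (φ x)] at h2
    have hec : ε * c = -(f (y, 0) + φ y * c - (f (x, 0) + φ x * c)) := by
      rw [hε]; field_simp [hc0]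
    nlinarith
  set g : EuclideanSpace ℝ (Fin d) →L[ℝ] ℝ :=
    f.comp (ContinuousLinearMap.inl ℝ (EuclideanSpace ℝ (Fin d)) ℝ) with hg
  have hgapp : ∀ y, g y = f (y, 0) := fun y => rfl
  set v : EuclideanSpace ℝ (Fin d) :=
    (InnerProductSpace.toDual ℝ (EuclideanSpace ℝ (Fin d))).symm g with hv
  have hvapp : ∀ y, ⟪v, y⟫ = g y := fun y => InnerProductSpace.toDual_symm_apply
  refine ⟨(-c)⁻¹ • v, fun y => ?_⟩
  have h3 : f (y, 0) - f (x, 0) ≤ (-c) * (φ y - φ x) := by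
    have := key y; nlinarith
  have h4 : ⟪(-c)⁻¹ • v, y - x⟫ = (-c)⁻¹ * (f (y, 0) - f (x, 0)) := by
    rw [real_inner_smul_left, inner_sub_right, hvapp, hvapp, hgapp, hgapp]
  rw [h4]
  have hcinv : 0 < (-c)⁻¹ := inv_pos.2 (by linarith)
  have h5 := mul_le_mul_of_nonneg_left h3 hcinv.le
  rw [inv_mul_cancel_left₀ (by linarith : (-c) ≠ 0)] at h5
  linarith

lemma sInf_bound {d : ℕ} (φ : EuclideanSpace ℝ (Fin d) → ℝ)
    (hconv : ConvexOn ℝ Set.univ φ) (x z : EuclideanSpace ℝ (Fin d)) (hzneg : φ z < 0)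
    (η : ℝ) (hη : 0 < η) (hb : ∀ ξ ∈ subgrad φ x, ‖ξ‖ ≤ η) :
    max (φ x) 0 / η ≤ sInf ((fun ξ => Metric.infDist x (Hset φ x ξ)) '' subgrad φ x) := by
  apply le_csInf ((subgrad_nonempty φ hconv x).image _)
  rintro a ⟨ξ, hξ, rfl⟩
  by_cases h0 : ξ = 0
  · subst h0
    have hx0 : φ x ≤ φ z := by
      have := hξ z
      simpa using this
    have hHeq : Hset φ x 0 = Set.univ := by simp [Hset]
    simp only
    rw [hHeq, Metric.infDist_zero_of_mem (Set.mem_univ x),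
      max_eq_right (by linarith : φ x ≤ 0)]
    simp
  · have hHeq : Hset φ x ξ = {y | φ x + ⟪ξ, y - x⟫ ≤ 0} := by simp [Hset, h0]
    simp only
    rw [hHeq]
    have hξn : 0 < ‖ξ‖ := norm_pos_iff.2 h0
    set H : Set (EuclideanSpace ℝ (Fin d)) := {y | φ x + ⟪ξ, y - x⟫ ≤ 0} with hH
    have hHne : H.Nonempty := by
      refine ⟨x - (max (φ x) 0 / ‖ξ‖ ^ 2) • ξ, ?_⟩
      simp only [hH, Set.mem_setOf_eq, sub_sub_cancel_left, inner_neg_right,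
        real_inner_smul_right, real_inner_self_eq_norm_sq]
      have : max (φ x) 0 / ‖ξ‖ ^ 2 * ‖ξ‖ ^ 2 = max (φ x) 0 :=
        div_mul_cancel₀ _ (by positivity)
      rw [this]
      rcases le_max_iff.1 (le_refl (max (φ x) 0)) with _ | _ <;>
        simp [le_max_iff]
    by_contra hcon
    push_neg at hcon
    obtain ⟨y, hy, hdy⟩ := (Metric.infDist_lt_iff hHne).1 hcon
    have h1 : φ x ≤ -⟪ξ, y - x⟫ := by
      have := hy; simp only [hH, Set.mem_setOf_eq] at this; linarith
    have h2 : -⟪ξ, y - x⟫ ≤ ‖ξ‖ * ‖y - x‖ := by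
      have := abs_real_inner_le_norm ξ (y - x)
      have := neg_abs_le ⟪ξ, y - x⟫
      linarith [abs_nonneg ⟪ξ, y - x⟫]
    have h3 : ‖y - x‖ = dist x y := by rw [dist_comm, dist_eq_norm]
    have h4 : φ x ≤ η * dist x y := by
      have hd0 : 0 ≤ dist x y := dist_nonneg
      have : ‖ξ‖ * ‖y - x‖ ≤ η * dist x y := by
        rw [h3]; exact mul_le_mul_of_nonneg_right (hb ξ hξ) hd0
      linarith
    have h5 : max (φ x) 0 ≤ η * dist x y := by
      have := mul_nonneg hη.le (dist_nonneg (x := x) (y := y))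
      exact max_le h4 this
    have h6 : (φ x ⊔ 0) / η ≤ dist x y := (div_le_iff₀ hη).2 (by nlinarith)
    linarith

/-- Linear-regularity-type error bound (Proposition 3.1(ii) of the paper). -/
theorem linear_regularity {d m : ℕ} (hm : 0 < m)
    (φ : Fin m → EuclideanSpace ℝ (Fin d) → ℝ)
    (hconv : ∀ j, ConvexOn ℝ Set.univ (φ j))
    (C0 : Set (EuclideanSpace ℝ (Fin d))) (hC0c : IsCompact C0) (hC0v : Convex ℝ C0)
    (z : EuclideanSpace ℝ (Fin d)) (hz : z ∈ C0) (hzs : ∀ j, φ j z < 0)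
    (η : ℝ) (hη : 0 < η)
    (hbound : ∀ j, ∀ x ∈ C0, ∀ ξ ∈ subgrad (φ j) x, ‖ξ‖ ≤ η) :
    ∃ κ > 0, ∀ x ∈ C0,
      Metric.infDist x (C0 ∩ {y | ∀ j, φ j y ≤ 0}) ≤
        κ * Finset.univ.sup' (Finset.univ_nonempty_iff.mpr ⟨⟨0, hm⟩⟩)
          (fun j => sInf ((fun ξ => Metric.infDist x (Hset (φ j) x ξ)) '' subgrad (φ j) x)) := by
  have hne : (Finset.univ : Finset (Fin m)).Nonempty := Finset.univ_nonempty_iff.mpr ⟨⟨0, hm⟩⟩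
  set δ : ℝ := Finset.univ.inf' hne (fun j => -(φ j z)) with hδdef
  have hδ : 0 < δ := by
    rw [hδdef, Finset.lt_inf'_iff]
    intro j _; linarith [hzs j]
  set D : ℝ := Metric.diam C0 with hDdef
  have hD : 0 ≤ D := Metric.diam_nonneg
  refine ⟨η * (D + 1) / δ, by positivity, fun x hx => ?_⟩
  set F : ℝ := Finset.univ.sup' (Finset.univ_nonempty_iff.mpr ⟨⟨0, hm⟩⟩)
      (fun j => sInf ((fun ξ => Metric.infDist x (Hset (φ j) x ξ)) '' subgrad (φ j) x)) with hFdef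
  have hFb : ∀ j, max (φ j x) 0 / η ≤
      sInf ((fun ξ => Metric.infDist x (Hset (φ j) x ξ)) '' subgrad (φ j) x) :=
    fun j => sInf_bound (φ j) (hconv j) x z (hzs j) η hη (hbound j x hx)
  have hF0 : 0 ≤ F := by
    have h1 := hFb (⟨0, hm⟩ : Fin m)
    have h2 : (0:ℝ) ≤ max (φ (⟨0, hm⟩ : Fin m) x) 0 / η := by positivity
    refine (h2.trans h1).trans ?_
    exact Finset.le_sup' (fun j => sInf ((fun ξ => Metric.infDist x (Hset (φ j) x ξ)) '' subgrad (φ j) x)) (Finset.mem_univ _)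
  by_cases hcase : ∀ j, φ j x ≤ 0
  · rw [Metric.infDist_zero_of_mem (Set.mem_inter hx (by exact hcase))]
    positivity
  · push_neg at hcase
    obtain ⟨j0, hj0⟩ := hcase
    set fmax : ℝ := Finset.univ.sup' hne (fun j => φ j x) with hfdef
    have hfpos : 0 < fmax :=
      lt_of_lt_of_le hj0 (Finset.le_sup' (fun j => φ j x) (Finset.mem_univ j0))
    set lam : ℝ := fmax / (fmax + δ) with hlamdef
    have hlam0 : 0 < lam := by positivity
    have hlam1 : lam ≤ 1 := by
      rw [hlamdef, div_le_one (by linarith)]; linarith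
    have hlameq : lam * (fmax + δ) = fmax := div_mul_cancel₀ _ (by positivity)
    set y : EuclideanSpace ℝ (Fin d) := lam • z + (1 - lam) • x with hydef
    have hyC0 : y ∈ C0 := hC0v hz hx hlam0.le (by linarith) (by ring)
    have hyC : y ∈ C0 ∩ {w | ∀ j, φ j w ≤ 0} := by
      refine ⟨hyC0, fun j => ?_⟩
      have h1 := (hconv j).2 (Set.mem_univ z) (Set.mem_univ x) hlam0.le
        (by linarith : (0:ℝ) ≤ 1 - lam) (by ring)
      have h2 : φ j z ≤ -δ := by
        have := Finset.inf'_le (fun j => -(φ j z)) (Finset.mem_univ j)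
        rw [← hδdef] at this; linarith
      have h3 : φ j x ≤ fmax := Finset.le_sup' (fun j => φ j x) (Finset.mem_univ j)
      have h4 : lam * φ j z ≤ lam * (-δ) := mul_le_mul_of_nonneg_left h2 hlam0.le
      have h5 : (1 - lam) * φ j x ≤ (1 - lam) * fmax :=
        mul_le_mul_of_nonneg_left h3 (by linarith)
      have h6 : lam * (-δ) + (1 - lam) * fmax = 0 := by nlinarith [hlameq]
      calc φ j y ≤ lam * φ j z + (1 - lam) * φ j x := h1
        _ ≤ 0 := by linarith
    have hdist : Metric.infDist x (C0 ∩ {w | ∀ j, φ j w ≤ 0}) ≤ lam * D := by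
      calc Metric.infDist x (C0 ∩ {w | ∀ j, φ j w ≤ 0}) ≤ dist x y :=
            Metric.infDist_le_dist_of_mem hyC
        _ = ‖lam • (x - z)‖ := by
            rw [dist_eq_norm]
            congr 1
            rw [hydef]
            module
        _ = lam * ‖x - z‖ := by rw [norm_smul, Real.norm_eq_abs, abs_of_pos hlam0]
        _ ≤ lam * D := by
            refine mul_le_mul_of_nonneg_left ?_ hlam0.le
            rw [← dist_eq_norm]
            exact Metric.dist_le_diam_of_mem hC0c.isBounded hx hz
    have hlamle : lam ≤ fmax / δ := by
      rw [hlamdef]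
      exact div_le_div_of_nonneg_left hfpos.le hδ (by linarith)
    have hFf : fmax / η ≤ F := by
      obtain ⟨js, _, hjs⟩ := Finset.exists_mem_eq_sup' hne (fun j => φ j x)
      have h1 : max (φ js x) 0 = fmax := by
        rw [hfdef, hjs, max_eq_left]
        rw [← hjs, ← hfdef]; exact hfpos.le
      have := hFb js
      rw [h1] at this
      exact this.trans (Finset.le_sup' (fun j => sInf ((fun ξ => Metric.infDist x (Hset (φ j) x ξ)) '' subgrad (φ j) x)) (Finset.mem_univ js))
    have hchain : lam * D ≤ (η * (D + 1) / δ) * (fmax / η) := by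
      have : (η * (D + 1) / δ) * (fmax / η) = (D + 1) * fmax / δ := by
        field_simp
      rw [this]
      calc lam * D ≤ (fmax / δ) * D := mul_le_mul_of_nonneg_right hlamle hD
        _ ≤ (D + 1) * fmax / δ := by
            rw [div_mul_eq_mul_div]
            exact (div_le_div_iff_of_pos_right hδ).2 (by nlinarith)
    calc Metric.infDist x (C0 ∩ {w | ∀ j, φ j w ≤ 0}) ≤ lam * D := hdist
      _ ≤ (η * (D + 1) / δ) * (fmax / η) := hchain
      _ ≤ (η * (D + 1) / δ) * F := by
          apply mul_le_mul_of_nonneg_left hFf (by positivity)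
end

section
/- Let φ₁, φ₂ : ℝ^d → ℝ be convex, x, z ∈ ℝ^d, θ > 0. Suppose for indices j' and j that θ φ_{j'}(x) φ_j(z) - φ_{j'}(z) φ_j(x) ≤ 0, that φ_{j'}(x) > 0 and φ_{j'}(z) < 0, and define y = (θ φ_{j'}(x) z - φ_{j'}(z) x)/(θ φ_{j'}(x) - φ_{j'}(z)). Then φ_j(y) ≤ 0. -/
/-- Feasibility of the convex combination constructed in Lemma 3.1 of the paper. -/
theorem convex_combination_feasible {d : ℕ}
    (ψ φ : EuclideanSpace ℝ (Fin d) → ℝ)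
    (hψ : ConvexOn ℝ Set.univ ψ) (hφ : ConvexOn ℝ Set.univ φ)
    (x z : EuclideanSpace ℝ (Fin d)) (θ : ℝ) (hθ : 0 < θ)
    (hmix : θ * ψ x * φ z - ψ z * φ x ≤ 0)
    (hx : 0 < ψ x) (hz : ψ z < 0) :
    φ ((θ * ψ x - ψ z)⁻¹ • ((θ * ψ x) • z - (ψ z) • x)) ≤ 0 := by
  have hD : 0 < θ * ψ x - ψ z := by nlinarith
  set a : ℝ := (θ * ψ x) / (θ * ψ x - ψ z) with ha
  set b : ℝ := (-ψ z) / (θ * ψ x - ψ z) with hb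
  have ha0 : 0 ≤ a := by positivity
  have hb0 : 0 ≤ b := by
    apply div_nonneg (by linarith) hD.le
  have hab : a + b = 1 := by
    rw [ha, hb, ← add_div, div_eq_one_iff_eq hD.ne']; ring
  have key := hφ.2 (Set.mem_univ z) (Set.mem_univ x) ha0 hb0 hab
  have heq : (θ * ψ x - ψ z)⁻¹ • ((θ * ψ x) • z - (ψ z) • x) = a • z + b • x := by
    rw [ha, hb]
    match_scalars <;> field_simp
  rw [heq]
  refine key.trans ?_
  rw [ha, hb, smul_eq_mul, smul_eq_mul, div_mul_eq_mul_div, div_mul_eq_mul_div,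
    ← add_div]
  apply div_nonpos_of_nonpos_of_nonneg _ hD.le
  nlinarith
end

section
/- Let f : ℝ^d → ℝ be differentiable convex with ‖∇f(x) - ∇f(y)‖ ≤ L(‖x - y‖ + 1) for all x, y. Let C ⊆ ℝ^d be nonempty closed convex, x ∈ ℝ^d, x* a point with f(x*) ≤ f(y) for all y ∈ C and x* ∈ C, and v = ∇f(x). Then for all α > 0 and λ > 0: 2α⟨v, x - x*⟩ ≥ -(2αL + 4/λ)·dist(x,C)² - α²L²λ‖x - x*‖² - α²λ(2L² + ‖∇f(x*)‖²) + 2α(f(Π_C(x)) - f(x*)). -/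
open RealInnerProductSpace

lemma amgm_aux (u v lam : ℝ) (hlam : 0 < lam) : 2*u*v ≤ lam*u^2 + v^2/lam := by
  have h2 : (2*u*v - lam*u^2) * lam ≤ v^2 := by nlinarith [sq_nonneg (lam*u - v)]
  have h3 : 2*u*v - lam*u^2 ≤ v^2 / lam := (le_div_iff₀ hlam).2 h2
  linarith

lemma grad_convex_le {d : ℕ} (f : EuclideanSpace ℝ (Fin d) → ℝ)
    (hconv : ConvexOn ℝ Set.univ f) (hdiff : Differentiable ℝ f)
    (x y : EuclideanSpace ℝ (Fin d)) :
    f x + ⟪gradient f x, y - x⟫ ≤ f y := by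
  set φ : ℝ → ℝ := fun t => f (x + t • (y - x)) with hφdef
  have hline : HasDerivAt (fun t : ℝ => x + t • (y - x)) (y - x) 0 := by
    simpa using ((hasDerivAt_id (0:ℝ)).smul_const (y - x)).const_add x
  have hf : HasFDerivAt f (fderiv ℝ f x) ((fun t : ℝ => x + t • (y - x)) 0) := by
    simpa using (hdiff x).hasFDerivAt
  have hφ : HasDerivAt φ (fderiv ℝ f x (y - x)) 0 := hf.comp_hasDerivAt 0 hline
  have hval : fderiv ℝ f x (y - x) = ⟪gradient f x, y - x⟫ := by
    have hg : HasFDerivAt f (InnerProductSpace.toDual ℝ _ (gradient f x)) x :=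
      (hdiff x).hasGradientAt.hasFDerivAt
    rw [hg.fderiv]
    simp [InnerProductSpace.toDual_apply_apply]
  have hslope : ∀ t ∈ Set.Ioc (0:ℝ) 1, slope φ 0 t ≤ f y - f x := by
    intro t ht
    have hc := hconv.2 (Set.mem_univ x) (Set.mem_univ y)
      (by linarith [ht.2] : (0:ℝ) ≤ 1 - t) ht.1.le (by ring)
    have heq : x + t • (y - x) = (1-t) • x + t • y := by
      rw [smul_sub]; module
    have hφt : φ t ≤ (1-t) * f x + t * f y := by
      show f (x + t • (y - x)) ≤ _
      rw [heq]; simpa using hc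
    have hφ0 : φ 0 = f x := by simp [hφdef]
    rw [slope_def_field, sub_zero, div_le_iff₀ ht.1]
    nlinarith [hφt]
  have htend : Filter.Tendsto (slope φ 0) (nhdsWithin 0 (Set.Ioi 0))
      (nhds (fderiv ℝ f x (y - x))) :=
    (hasDerivAt_iff_tendsto_slope.1 hφ).mono_left
      (nhdsWithin_mono _ (fun z hz => ne_of_gt hz))
  have hev : ∀ᶠ t in nhdsWithin (0:ℝ) (Set.Ioi 0), slope φ 0 t ≤ f y - f x := by
    filter_upwards [Ioc_mem_nhdsGT_of_mem (Set.left_mem_Ico.2 one_pos)] with t ht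
    exact hslope t ht
  have hmain : fderiv ℝ f x (y - x) ≤ f y - f x := le_of_tendsto htend hev
  rw [hval] at hmain
  linarith

/-- Deterministic version of Lemma 3.5 of the paper. -/
theorem inner_product_lower_bound {d : ℕ} (f : EuclideanSpace ℝ (Fin d) → ℝ)
    (hconv : ConvexOn ℝ Set.univ f) (hdiff : Differentiable ℝ f)
    (L : ℝ) (hL : 0 < L)
    (hlip : ∀ x y : EuclideanSpace ℝ (Fin d),
      ‖gradient f x - gradient f y‖ ≤ L * (‖x - y‖ + 1))
    (C : Set (EuclideanSpace ℝ (Fin d))) (hne : C.Nonempty) (hcl : IsClosed C)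
    (hcv : Convex ℝ C)
    (xs : EuclideanSpace ℝ (Fin d)) (hxsC : xs ∈ C) (hmin : ∀ y ∈ C, f xs ≤ f y)
    (x p : EuclideanSpace ℝ (Fin d)) (hpC : p ∈ C) (hp : ∀ z ∈ C, ‖x - p‖ ≤ ‖x - z‖)
    (α lam : ℝ) (hα : 0 < α) (hlam : 0 < lam) :
    2 * α * ⟪gradient f x, x - xs⟫ ≥
      -(2 * α * L + 4 / lam) * ‖x - p‖ ^ 2 - α ^ 2 * L ^ 2 * lam * ‖x - xs‖ ^ 2
        - α ^ 2 * lam * (2 * L ^ 2 + ‖gradient f xs‖ ^ 2) + 2 * α * (f p - f xs) := by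
  set a := ‖x - p‖ with ha
  set b := ‖x - xs‖ with hb
  set g := ‖gradient f xs‖ with hg
  set G := ‖gradient f p‖ with hG
  -- convexity inequalities
  have h1 : f x + ⟪gradient f x, xs - x⟫ ≤ f xs := grad_convex_le f hconv hdiff x xs
  have h1' : f x - f xs ≤ ⟪gradient f x, x - xs⟫ := by
    have : ⟪gradient f x, xs - x⟫ = -⟪gradient f x, x - xs⟫ := by
      rw [← inner_neg_right]; congr 1; abel
    linarith [h1, this ▸ h1]
  have h2 : f p + ⟪gradient f p, x - p⟫ ≤ f x := grad_convex_le f hconv hdiff p x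
  -- Cauchy-Schwarz
  have h3 : -(G * a) ≤ ⟪gradient f p, x - p⟫ := by
    have := abs_real_inner_le_norm (gradient f p) (x - p)
    rw [abs_le] at this
    linarith [this.1]
  -- gradient bound
  have h4 : G ≤ L * (‖p - xs‖ + 1) + g := by
    calc G = ‖(gradient f p - gradient f xs) + gradient f xs‖ := by
            rw [hG]; congr 1; abel
      _ ≤ ‖gradient f p - gradient f xs‖ + g := norm_add_le _ _
      _ ≤ L * (‖p - xs‖ + 1) + g := by linarith [hlip p xs]
  have h5 : ‖p - xs‖ ≤ a + b := by
    calc ‖p - xs‖ = ‖(p - x) + (x - xs)‖ := by congr 1; abel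
      _ ≤ ‖p - x‖ + ‖x - xs‖ := norm_add_le _ _
      _ = a + b := by rw [norm_sub_rev]
  have hG4 : G ≤ L * (a + b + 1) + g := by
    have := mul_le_mul_of_nonneg_left h5 hL.le
    linarith
  have ha0 : (0:ℝ) ≤ a := norm_nonneg _
  have hb0 : (0:ℝ) ≤ b := norm_nonneg _
  have hg0 : (0:ℝ) ≤ g := norm_nonneg _
  have hG0 : (0:ℝ) ≤ G := norm_nonneg _
  -- AM-GM pieces
  have am1 : 2*(α*L*b)*a ≤ lam*(α*L*b)^2 + a^2/lam := amgm_aux _ _ _ hlam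
  have am2 : 2*(α*L)*a ≤ lam*(α*L)^2 + a^2/lam := amgm_aux _ _ _ hlam
  have am3 : 2*(α*g)*a ≤ lam*(α*g)^2 + a^2/lam := amgm_aux _ _ _ hlam
  -- bound 2αGa
  have hkey : 2*α*(G*a) ≤ (2*α*L + 4/lam)*a^2 + α^2*L^2*lam*b^2
      + α^2*lam*(2*L^2 + g^2) := by
    have h6 : 2*α*(G*a) ≤ 2*α*((L*(a+b+1)+g)*a) :=
      mul_le_mul_of_nonneg_left (mul_le_mul_of_nonneg_right hG4 ha0) (by positivity)
    have h7 : (0:ℝ) ≤ α^2*lam*L^2 := by positivity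
    have e1 : 2*α*((L*(a+b+1)+g)*a) = 2*α*L*a^2 + 2*(α*L*b)*a + 2*(α*L)*a + 2*(α*g)*a := by
      ring
    rw [e1] at h6
    have e2 : lam*(α*L*b)^2 = α^2*L^2*lam*b^2 := by ring
    rw [e2] at am1
    have hkey' : 2*α*(G*a) ≤ 2*α*L*a^2 + 4*(a^2/lam) + α^2*L^2*lam*b^2
        + α^2*lam*(2*L^2 + g^2) := by
      have hq : (0:ℝ) ≤ a^2/lam := div_nonneg (sq_nonneg a) hlam.le
      have e5 : lam*(α*L)^2 + lam*(α*g)^2 + α^2*lam*L^2 = α^2*lam*(2*L^2 + g^2) := by ring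
      linarith [am1, am2, am3, h6, h7, hq]
    have e4 : (2*α*L + 4/lam)*a^2 = 2*α*L*a^2 + 4*(a^2/lam) := by
      field_simp
    linarith [hkey', e4]
  -- combine
  have h2α : (0:ℝ) ≤ 2*α := by positivity
  have hA : 2*α*(f x - f xs) ≤ 2*α*⟪gradient f x, x - xs⟫ :=
    mul_le_mul_of_nonneg_left h1' h2α
  have hB : 2*α*(-(G*a) + (f p - f xs)) ≤ 2*α*(f x - f xs) :=
    mul_le_mul_of_nonneg_left (by linarith [h2, h3]) h2α
  have e3 : 2*α*(-(G*a) + (f p - f xs)) = -(2*α*(G*a)) + 2*α*(f p - f xs) := by ring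
  rw [e3] at hB
  linarith [hkey, hA, hB]
end

section
/- Let f_1,…,f_n : ℝ^d → ℝ be differentiable with ‖∇f_i(x) - ∇f_i(y)‖ ≤ L_i(‖x - y‖ + 1), let f = (1/n)∑ f_i and L = √((1/n)∑ L_i²). Fix x, x̃, x* ∈ ℝ^d and let I be a uniformly random size-b multiset of indices drawn i.i.d. from [n]; define v = (1/b)∑_{i∈I}(∇f_i(x) - ∇f_i(x̃)) + ∇f(x̃). Then E[‖v‖²] ≤ 8L²‖x - x*‖² + 16L²‖x̃ - x*‖² + 12L² + 4‖∇f(x*)‖². -/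
variable {E : Type*} [NormedAddCommGroup E] [InnerProductSpace ℝ E]

lemma sq_norm_add_le' (a c : E) : ‖a + c‖^2 ≤ 2*‖a‖^2 + 2*‖c‖^2 := by
  have h : ‖a + c‖^2 ≤ (‖a‖ + ‖c‖)^2 := pow_le_pow_left₀ (norm_nonneg _) (norm_add_le a c) 2
  nlinarith [sq_nonneg (‖a‖ - ‖c‖)]

lemma jensen_avg {b : ℕ} (hb : 0 < b) (a : Fin b → E) :
    ‖(b:ℝ)⁻¹ • ∑ t, a t‖^2 ≤ (b:ℝ)⁻¹ * ∑ t, ‖a t‖^2 := by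
  have hbp : (0:ℝ) < b := by exact_mod_cast hb
  have h1 : ‖∑ t, a t‖^2 ≤ (b:ℝ) * ∑ t, ‖a t‖^2 := by
    calc ‖∑ t, a t‖^2 ≤ (∑ t, ‖a t‖)^2 := by
          exact pow_le_pow_left₀ (norm_nonneg _) (norm_sum_le Finset.univ a) 2
      _ ≤ (Finset.univ.card : ℝ) * ∑ t, ‖a t‖^2 := by
          exact_mod_cast sq_sum_le_card_mul_sum_sq (s := Finset.univ) (f := fun t => ‖a t‖)
      _ = (b:ℝ) * ∑ t, ‖a t‖^2 := by simp
  rw [norm_smul]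
  have : (‖(b:ℝ)⁻¹‖ * ‖∑ t, a t‖)^2 = (b:ℝ)⁻¹ * ((b:ℝ)⁻¹ * ‖∑ t, a t‖^2) := by
    rw [Real.norm_eq_abs, abs_of_pos (by positivity)]; ring
  rw [this]
  have h2 : (b:ℝ)⁻¹ * ‖∑ t, a t‖^2 ≤ ∑ t, ‖a t‖^2 := by
    rw [inv_mul_le_iff₀ hbp]
    linarith [h1]
  exact mul_le_mul_of_nonneg_left h2 (by positivity)

lemma pullout {n b : ℕ} (φ : Fin n → ℝ) (t : Fin b) :
    ∑ I : Fin b → Fin n, φ (I t) = (n:ℝ)^(b-1) * ∑ i, φ i := by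
  rw [← Equiv.sum_comp (Equiv.funSplitAt t (Fin n)).symm (fun I => φ (I t))]
  have : ∀ p : Fin n × ({j : Fin b // j ≠ t} → Fin n),
      ((Equiv.funSplitAt t (Fin n)).symm p) t = p.1 := by
    intro p; simp [Equiv.funSplitAt, Equiv.piSplitAt]
  simp_rw [this]
  rw [Fintype.sum_prod_type]
  simp_rw [Finset.sum_const]
  have hcard : Fintype.card ({j : Fin b // j ≠ t} → Fin n) = n^(b-1) := by
    rw [Fintype.card_fun]
    congr 1
    · simp
    · rw [Fintype.card_subtype_compl]
      simp
  simp [hcard, Finset.sum_mul, mul_comm]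

lemma variance_le {n : ℕ} (u : Fin n → E) :
    ∑ i, ‖(1/n:ℝ) • ∑ j, u j - u i‖^2 ≤ ∑ i, ‖u i‖^2 := by
  rcases Nat.eq_zero_or_pos n with h | h
  · subst h; simp
  set ub : E := (1/n:ℝ) • ∑ j, u j with hub
  have key : ∑ j, u j = (n:ℝ) • ub := by
    rw [hub, smul_smul]
    rw [mul_one_div, div_self (by positivity), one_smul]
  have expand : ∀ i, ‖ub - u i‖^2 = ‖u i‖^2 - 2 * inner ℝ (u i) ub + ‖ub‖^2 := by
    intro i
    rw [norm_sub_rev]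
    exact norm_sub_sq_real (u i) ub
  simp_rw [expand]
  rw [Finset.sum_add_distrib, Finset.sum_sub_distrib, ← Finset.mul_sum, ← sum_inner, key, real_inner_smul_left, Finset.sum_const]
  simp only [Finset.card_univ, Fintype.card_fin, nsmul_eq_mul]
  nlinarith [sq_nonneg ‖ub‖, norm_nonneg ub, (Nat.cast_pos (α := ℝ)).mpr h, sq_abs ‖ub‖,
    real_inner_self_eq_norm_sq ub]

open InnerProductSpace in
lemma grad_avg {d n : ℕ} (f : Fin n → EuclideanSpace ℝ (Fin d) → ℝ)
    (hdiff : ∀ i, Differentiable ℝ (f i)) (y : EuclideanSpace ℝ (Fin d)) :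
    gradient (fun z => (1 / n : ℝ) * ∑ i, f i z) y
      = (1 / n : ℝ) • ∑ i, gradient (f i) y := by
  have h1 : fderiv ℝ (fun z => (1 / n : ℝ) * ∑ i, f i z) y
      = (1 / n : ℝ) • ∑ i, fderiv ℝ (f i) y := by
    rw [fderiv_const_mul (by exact Differentiable.fun_sum (fun i _ => hdiff i) y)]
    congr 1
    exact fderiv_fun_sum (fun i _ => (hdiff i y))
  rw [gradient, h1, map_smul, map_sum]
  rfl

set_option maxHeartbeats 1000000 in
/-- Second-moment bound for the SVRG gradient estimator (Lemma 3.4 of the paper), with the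
expectation written as an average over all i.i.d. uniform draws `I : Fin b → Fin n`. -/
theorem svrg_second_moment {d n : ℕ} (hn : 0 < n) (b : ℕ) (hb : 0 < b)
    (f : Fin n → EuclideanSpace ℝ (Fin d) → ℝ) (L : Fin n → ℝ) (hL : ∀ i, 0 < L i)
    (hdiff : ∀ i, Differentiable ℝ (f i))
    (hlip : ∀ i, ∀ x y : EuclideanSpace ℝ (Fin d),
      ‖gradient (f i) x - gradient (f i) y‖ ≤ L i * (‖x - y‖ + 1))
    (x xt xs : EuclideanSpace ℝ (Fin d)) :
    (1 / (n : ℝ) ^ b) * ∑ I : Fin b → Fin n,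
        ‖(b : ℝ)⁻¹ • (∑ t, (gradient (f (I t)) x - gradient (f (I t)) xt)) +
            gradient (fun z => (1 / n : ℝ) * ∑ i, f i z) xt‖ ^ 2 ≤
      8 * Real.sqrt ((1 / n : ℝ) * ∑ i, (L i) ^ 2) ^ 2 * ‖x - xs‖ ^ 2 +
        16 * Real.sqrt ((1 / n : ℝ) * ∑ i, (L i) ^ 2) ^ 2 * ‖xt - xs‖ ^ 2 +
        12 * Real.sqrt ((1 / n : ℝ) * ∑ i, (L i) ^ 2) ^ 2 +
        4 * ‖gradient (fun z => (1 / n : ℝ) * ∑ i, f i z) xs‖ ^ 2 := by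
  have hnp : (0:ℝ) < n := by exact_mod_cast hn
  have hbp : (0:ℝ) < b := by exact_mod_cast hb
  set g : Fin n → EuclideanSpace ℝ (Fin d) → EuclideanSpace ℝ (Fin d) := fun i => gradient (f i) with hg
  set w : Fin n → EuclideanSpace ℝ (Fin d) := fun i => g i x - g i xs with hw
  set u : Fin n → EuclideanSpace ℝ (Fin d) := fun i => g i xt - g i xs with hu
  set ub : EuclideanSpace ℝ (Fin d) := (1/n:ℝ) • ∑ j, u j with hub
  set K : ℝ := Real.sqrt ((1 / n : ℝ) * ∑ i, (L i) ^ 2) ^ 2 with hKdef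
  have hK : K = (1/n:ℝ) * ∑ i, (L i)^2 := Real.sq_sqrt (by positivity)
  have hK0 : (0:ℝ) ≤ K := sq_nonneg _
  set Gs : EuclideanSpace ℝ (Fin d) := gradient (fun z => (1 / n : ℝ) * ∑ i, f i z) xs with hGs
  have hGt : gradient (fun z => (1 / n : ℝ) * ∑ i, f i z) xt = Gs + ub := by
    rw [hGs, grad_avg f hdiff xt, grad_avg f hdiff xs, hub, hu]
    simp only [hg]
    rw [Finset.sum_sub_distrib, smul_sub]
    abel
  -- pointwise bound
  have point : ∀ I : Fin b → Fin n,
      ‖(b : ℝ)⁻¹ • (∑ t, (gradient (f (I t)) x - gradient (f (I t)) xt)) +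
          gradient (fun z => (1 / n : ℝ) * ∑ i, f i z) xt‖ ^ 2 ≤
        4 * ((b:ℝ)⁻¹ * ∑ t, ‖w (I t)‖^2) +
          2 * ((b:ℝ)⁻¹ * ∑ t, ‖ub - u (I t)‖^2) + 4 * ‖Gs‖^2 := by
    intro I
    have hsum : ∑ t, (gradient (f (I t)) x - gradient (f (I t)) xt)
        = (∑ t, w (I t)) - ∑ t, u (I t) := by
      rw [← Finset.sum_sub_distrib]
      refine Finset.sum_congr rfl (fun t _ => ?_)
      simp only [hw, hu, hg]
      abel
    have hsub : ∑ t : Fin b, (ub - u (I t)) = (b:ℝ) • ub - ∑ t, u (I t) := by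
      rw [Finset.sum_sub_distrib, Finset.sum_const, Finset.card_univ, Fintype.card_fin,
        ← Nat.cast_smul_eq_nsmul ℝ]
    have hdec : (b : ℝ)⁻¹ • (∑ t, (gradient (f (I t)) x - gradient (f (I t)) xt)) +
          gradient (fun z => (1 / n : ℝ) * ∑ i, f i z) xt
        = ((b:ℝ)⁻¹ • ∑ t, w (I t) + Gs) + (b:ℝ)⁻¹ • ∑ t, (ub - u (I t)) := by
      rw [hGt, hsum, hsub, smul_sub, smul_sub, smul_smul,
        inv_mul_cancel₀ (ne_of_gt hbp), one_smul]
      abel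
    rw [hdec]
    have h1 := sq_norm_add_le' ((b:ℝ)⁻¹ • ∑ t, w (I t) + Gs) ((b:ℝ)⁻¹ • ∑ t, (ub - u (I t)))
    have h2 := sq_norm_add_le' ((b:ℝ)⁻¹ • ∑ t, w (I t)) Gs
    have h3 := jensen_avg hb (fun t => w (I t))
    have h4 := jensen_avg hb (fun t => ub - u (I t))
    linarith
  -- sum the pointwise bound
  have sum_le : ∑ I : Fin b → Fin n,
      ‖(b : ℝ)⁻¹ • (∑ t, (gradient (f (I t)) x - gradient (f (I t)) xt)) +
          gradient (fun z => (1 / n : ℝ) * ∑ i, f i z) xt‖ ^ 2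
      ≤ ∑ I : Fin b → Fin n, (4 * ((b:ℝ)⁻¹ * ∑ t, ‖w (I t)‖^2) +
          2 * ((b:ℝ)⁻¹ * ∑ t, ‖ub - u (I t)‖^2) + 4 * ‖Gs‖^2) :=
    Finset.sum_le_sum (fun I _ => point I)
  -- compute the averaged RHS
  have pow_eq : (n:ℝ)^b = n * (n:ℝ)^(b-1) := by
    conv_lhs => rw [← Nat.succ_pred_eq_of_pos hb]
    rw [pow_succ']; rfl
  have swapw : ∑ I : Fin b → Fin n, ∑ t, ‖w (I t)‖^2
      = (b:ℝ) * ((n:ℝ)^(b-1) * ∑ i, ‖w i‖^2) := by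
    rw [Finset.sum_comm]
    simp_rw [pullout (fun i => ‖w i‖^2)]
    rw [Finset.sum_const, Finset.card_univ, Fintype.card_fin, nsmul_eq_mul]
  have swapu : ∑ I : Fin b → Fin n, ∑ t, ‖ub - u (I t)‖^2
      = (b:ℝ) * ((n:ℝ)^(b-1) * ∑ i, ‖ub - u i‖^2) := by
    rw [Finset.sum_comm]
    simp_rw [pullout (fun i => ‖ub - u i‖^2)]
    rw [Finset.sum_const, Finset.card_univ, Fintype.card_fin, nsmul_eq_mul]
  have rhs_eq : (1 / (n : ℝ) ^ b) * ∑ I : Fin b → Fin n,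
        (4 * ((b:ℝ)⁻¹ * ∑ t, ‖w (I t)‖^2) +
          2 * ((b:ℝ)⁻¹ * ∑ t, ‖ub - u (I t)‖^2) + 4 * ‖Gs‖^2)
      = 4 * ((1/n:ℝ) * ∑ i, ‖w i‖^2) + 2 * ((1/n:ℝ) * ∑ i, ‖ub - u i‖^2)
          + 4 * ‖Gs‖^2 := by
    rw [Finset.sum_add_distrib, Finset.sum_add_distrib, ← Finset.mul_sum, ← Finset.mul_sum,
      ← Finset.mul_sum, ← Finset.mul_sum, swapw, swapu, Finset.sum_const, Finset.card_univ,
      Fintype.card_fun, Fintype.card_fin, Fintype.card_fin, nsmul_eq_mul, pow_eq]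
    push_cast
    field_simp
    rw [pow_eq]
    ring
  -- the three final estimates
  have hw_bound : (1/n:ℝ) * ∑ i, ‖w i‖^2 ≤ K * (2 * ‖x - xs‖^2 + 2) := by
    have h1 : ∑ i, ‖w i‖^2 ≤ ∑ i, (L i)^2 * (‖x - xs‖ + 1)^2 := by
      refine Finset.sum_le_sum (fun i _ => ?_)
      have := hlip i x xs
      have h0 : (0:ℝ) ≤ ‖x - xs‖ + 1 := by positivity
      calc ‖w i‖^2 ≤ (L i * (‖x - xs‖ + 1))^2 :=
            pow_le_pow_left₀ (norm_nonneg _) this 2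
        _ = (L i)^2 * (‖x - xs‖ + 1)^2 := by ring
    have h2 : (1/n:ℝ) * ∑ i, ‖w i‖^2 ≤ K * (‖x - xs‖ + 1)^2 := by
      rw [hK]
      calc (1/n:ℝ) * ∑ i, ‖w i‖^2 ≤ (1/n:ℝ) * ∑ i, (L i)^2 * (‖x - xs‖ + 1)^2 := by
            apply mul_le_mul_of_nonneg_left h1 (by positivity)
        _ = (1/n:ℝ) * (∑ i, (L i)^2) * (‖x - xs‖ + 1)^2 := by
            rw [← Finset.sum_mul]; ring
    have h3 : (‖x - xs‖ + 1)^2 ≤ 2 * ‖x - xs‖^2 + 2 := by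
      nlinarith [sq_nonneg (‖x - xs‖ - 1)]
    calc (1/n:ℝ) * ∑ i, ‖w i‖^2 ≤ K * (‖x - xs‖ + 1)^2 := h2
      _ ≤ K * (2 * ‖x - xs‖^2 + 2) := mul_le_mul_of_nonneg_left h3 hK0
  have hu_bound : (1/n:ℝ) * ∑ i, ‖ub - u i‖^2 ≤ K * (2 * ‖xt - xs‖^2 + 2) := by
    have hv : ∑ i, ‖ub - u i‖^2 ≤ ∑ i, ‖u i‖^2 := by
      rw [hub]; exact variance_le u
    have h1 : ∑ i, ‖u i‖^2 ≤ ∑ i, (L i)^2 * (‖xt - xs‖ + 1)^2 := by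
      refine Finset.sum_le_sum (fun i _ => ?_)
      have := hlip i xt xs
      calc ‖u i‖^2 ≤ (L i * (‖xt - xs‖ + 1))^2 :=
            pow_le_pow_left₀ (norm_nonneg _) this 2
        _ = (L i)^2 * (‖xt - xs‖ + 1)^2 := by ring
    have h2 : (1/n:ℝ) * ∑ i, ‖ub - u i‖^2 ≤ K * (‖xt - xs‖ + 1)^2 := by
      rw [hK]
      calc (1/n:ℝ) * ∑ i, ‖ub - u i‖^2 ≤ (1/n:ℝ) * ∑ i, (L i)^2 * (‖xt - xs‖ + 1)^2 := by
            apply mul_le_mul_of_nonneg_left (le_trans hv h1) (by positivity)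
        _ = (1/n:ℝ) * (∑ i, (L i)^2) * (‖xt - xs‖ + 1)^2 := by
            rw [← Finset.sum_mul]; ring
    have h3 : (‖xt - xs‖ + 1)^2 ≤ 2 * ‖xt - xs‖^2 + 2 := by
      nlinarith [sq_nonneg (‖xt - xs‖ - 1)]
    calc (1/n:ℝ) * ∑ i, ‖ub - u i‖^2 ≤ K * (‖xt - xs‖ + 1)^2 := h2
      _ ≤ K * (2 * ‖xt - xs‖^2 + 2) := mul_le_mul_of_nonneg_left h3 hK0
  -- put it all together
  have final : (1 / (n : ℝ) ^ b) * ∑ I : Fin b → Fin n,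
        ‖(b : ℝ)⁻¹ • (∑ t, (gradient (f (I t)) x - gradient (f (I t)) xt)) +
            gradient (fun z => (1 / n : ℝ) * ∑ i, f i z) xt‖ ^ 2
      ≤ 4 * (K * (2 * ‖x - xs‖^2 + 2)) + 2 * (K * (2 * ‖xt - xs‖^2 + 2)) + 4 * ‖Gs‖^2 := by
    have hmul : (1 / (n : ℝ) ^ b) * ∑ I : Fin b → Fin n,
          ‖(b : ℝ)⁻¹ • (∑ t, (gradient (f (I t)) x - gradient (f (I t)) xt)) +
              gradient (fun z => (1 / n : ℝ) * ∑ i, f i z) xt‖ ^ 2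
        ≤ (1 / (n : ℝ) ^ b) * ∑ I : Fin b → Fin n,
            (4 * ((b:ℝ)⁻¹ * ∑ t, ‖w (I t)‖^2) +
              2 * ((b:ℝ)⁻¹ * ∑ t, ‖ub - u (I t)‖^2) + 4 * ‖Gs‖^2) :=
      mul_le_mul_of_nonneg_left sum_le (by positivity)
    rw [rhs_eq] at hmul
    linarith
  refine le_trans final ?_

  nlinarith [sq_nonneg ‖xt - xs‖, hK0, mul_nonneg hK0 (sq_nonneg ‖xt - xs‖)]
end

section
/- Let {a_k}, {u_k}, {t_k}, {d_k} be sequences of nonnegative random variables adapted to a filtration {G_k}, satisfying E[a_{k+1} | G_k] ≤ (1 + t_k) a_k - u_k + d_k almost surely for all k ≥ 0, with ∑_k t_k < ∞ and ∑_k d_k < ∞ almost surely. Then ∑_k u_k < ∞ almost surely, and a_k converges almost surely to a nonnegative random variable. -/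
open MeasureTheory Filter
open scoped ENNReal

namespace RobbinsSiegmundAux

variable {Ω : Type*}

/-- The product `∏_{j<k} (1 + t_j)`. -/
noncomputable def P (t : ℕ → Ω → ℝ) (k : ℕ) (ω : Ω) : ℝ :=
  ∏ j ∈ Finset.range k, (1 + t j ω)

/-- The scaled process `a_k / P_k`. -/
noncomputable def bb (a t : ℕ → Ω → ℝ) (k : ℕ) (ω : Ω) : ℝ := (P t k ω)⁻¹ * a k ω

/-- Scaled increments `u_k / P_{k+1}`. -/
noncomputable def up (u t : ℕ → Ω → ℝ) (k : ℕ) (ω : Ω) : ℝ := (P t (k + 1) ω)⁻¹ * u k ω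

/-- Partial sums of scaled increments. -/
noncomputable def US (u t : ℕ → Ω → ℝ) (k : ℕ) (ω : Ω) : ℝ :=
  ∑ j ∈ Finset.range k, up u t j ω

/-- The supermartingale `Z`. -/
noncomputable def Z (a u dd t : ℕ → Ω → ℝ) (k : ℕ) : Ω → ℝ :=
  fun ω => bb a t k ω + US u t k ω - US dd t k ω

/-- The event that we have not stopped by time `k`. -/
def Ek (dd t : ℕ → Ω → ℝ) (c : ℕ) (k : ℕ) : Set Ω := {ω | ∀ j ≤ k, US dd t (j + 1) ω ≤ c}

/-- The stopped process. -/
noncomputable def Y (a u dd t : ℕ → Ω → ℝ) (c : ℕ) : ℕ → Ω → ℝ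
  | 0 => Z a u dd t 0
  | (k + 1) => Y a u dd t c k +
      (Ek dd t c k).indicator (Z a u dd t (k + 1) - Z a u dd t k)

section facts

variable {t : ℕ → Ω → ℝ}

theorem P_succ (t : ℕ → Ω → ℝ) (k : ℕ) (ω : Ω) :
    P t (k + 1) ω = P t k ω * (1 + t k ω) := Finset.prod_range_succ _ _

theorem one_le_P (ht : ∀ k ω, 0 ≤ t k ω) (k : ℕ) (ω : Ω) : 1 ≤ P t k ω := by
  induction k with
  | zero => simp [P]
  | succ k ih => rw [P_succ]; nlinarith [ht k ω]

theorem P_pos (ht : ∀ k ω, 0 ≤ t k ω) (k : ℕ) (ω : Ω) : 0 < P t k ω :=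
  lt_of_lt_of_le one_pos (one_le_P ht k ω)

theorem P_mono (ht : ∀ k ω, 0 ≤ t k ω) (ω : Ω) : Monotone fun k => P t k ω :=
  monotone_nat_of_le_succ fun k => by
    rw [P_succ]
    nlinarith [P_pos ht k ω, ht k ω]

theorem Pinv_le_one (ht : ∀ k ω, 0 ≤ t k ω) (k : ℕ) (ω : Ω) : (P t k ω)⁻¹ ≤ 1 :=
  inv_le_one_of_one_le₀ (one_le_P ht k ω)

theorem P_le_exp (ht : ∀ k ω, 0 ≤ t k ω) {ω : Ω} (hsum : Summable fun k => t k ω) (k : ℕ) :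
    P t k ω ≤ Real.exp (∑' j, t j ω) := by
  calc P t k ω ≤ ∏ j ∈ Finset.range k, Real.exp (t j ω) := by
        refine Finset.prod_le_prod (fun j _ => by linarith [ht j ω]) fun j _ => ?_
        have := Real.add_one_le_exp (t j ω)
        linarith
    _ = Real.exp (∑ j ∈ Finset.range k, t j ω) := by rw [Real.exp_sum]
    _ ≤ Real.exp (∑' j, t j ω) :=
        Real.exp_le_exp.2 (hsum.sum_le_tsum _ (fun j _ => ht j ω))

end facts

section meas

variable {m0 : MeasurableSpace Ω} {ℱ : Filtration ℕ m0} {μ : Measure Ω}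
variable {a u t dd : ℕ → Ω → ℝ}

theorem P_sm (hadapt_t : Adapted ℱ t) {k n : ℕ} (hkn : k ≤ n + 1) :
    StronglyMeasurable[ℱ n] (P t k) := by
  apply Finset.stronglyMeasurable_fun_prod
  intro j hj
  have hj' : j ≤ n := by
    have := Finset.mem_range.1 hj; omega
  exact stronglyMeasurable_const.add ((hadapt_t j).stronglyMeasurable.mono (ℱ.mono hj'))

theorem Pinv_sm (hadapt_t : Adapted ℱ t) {k n : ℕ} (hkn : k ≤ n + 1) :
    StronglyMeasurable[ℱ n] fun ω => (P t k ω)⁻¹ :=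
  ((P_sm hadapt_t hkn).measurable.inv).stronglyMeasurable

theorem bb_sm (hadapt_a : Adapted ℱ a) (hadapt_t : Adapted ℱ t) (k : ℕ) :
    StronglyMeasurable[ℱ k] (bb a t k) :=
  (Pinv_sm hadapt_t k.le_succ).mul (hadapt_a k).stronglyMeasurable

theorem up_sm (hadapt_u : Adapted ℱ u) (hadapt_t : Adapted ℱ t) (k : ℕ) :
    StronglyMeasurable[ℱ k] (up u t k) :=
  (Pinv_sm hadapt_t le_rfl).mul (hadapt_u k).stronglyMeasurable

theorem US_sm (hadapt_u : Adapted ℱ u) (hadapt_t : Adapted ℱ t) {k n : ℕ} (hkn : k ≤ n + 1) :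
    StronglyMeasurable[ℱ n] (US u t k) := by
  apply Finset.stronglyMeasurable_fun_sum
  intro j hj
  have hj' : j ≤ n := by
    have := Finset.mem_range.1 hj; omega
  exact (up_sm hadapt_u hadapt_t j).mono (ℱ.mono hj')

theorem Z_sm (hadapt_a : Adapted ℱ a) (hadapt_u : Adapted ℱ u) (hadapt_d : Adapted ℱ dd)
    (hadapt_t : Adapted ℱ t) (k : ℕ) :
    StronglyMeasurable[ℱ k] (Z a u dd t k) :=
  ((bb_sm hadapt_a hadapt_t k).add (US_sm hadapt_u hadapt_t k.le_succ)).sub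
    (US_sm hadapt_d hadapt_t k.le_succ)

theorem Ek_meas (hadapt_d : Adapted ℱ dd) (hadapt_t : Adapted ℱ t) (c k : ℕ) :
    MeasurableSet[ℱ k] (Ek dd t c k) := by
  have : Ek dd t c k = ⋂ j ∈ Set.Iic k, {ω | US dd t (j + 1) ω ≤ (c : ℝ)} := by
    ext ω; simp [Ek, Set.mem_iInter]
  rw [this]
  refine MeasurableSet.biInter (Set.to_countable _) fun j hj => ?_
  have hsm : StronglyMeasurable[ℱ k] (US dd t (j + 1)) :=
    US_sm hadapt_d hadapt_t (by simpa using hj)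
  exact measurableSet_le hsm.measurable measurable_const

theorem bb_nonneg (ha : ∀ k ω, 0 ≤ a k ω) (ht : ∀ k ω, 0 ≤ t k ω) (k : ℕ) (ω : Ω) :
    0 ≤ bb a t k ω :=
  mul_nonneg (inv_nonneg.2 (P_pos ht k ω).le) (ha k ω)

theorem up_nonneg (hu : ∀ k ω, 0 ≤ u k ω) (ht : ∀ k ω, 0 ≤ t k ω) (k : ℕ) (ω : Ω) :
    0 ≤ up u t k ω :=
  mul_nonneg (inv_nonneg.2 (P_pos ht (k + 1) ω).le) (hu k ω)

theorem US_nonneg (hu : ∀ k ω, 0 ≤ u k ω) (ht : ∀ k ω, 0 ≤ t k ω) (k : ℕ) (ω : Ω) :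
    0 ≤ US u t k ω :=
  Finset.sum_nonneg fun j _ => up_nonneg hu ht j ω

theorem US_mono (hu : ∀ k ω, 0 ≤ u k ω) (ht : ∀ k ω, 0 ≤ t k ω) (ω : Ω) :
    Monotone fun k => US u t k ω :=
  monotone_nat_of_le_succ fun k => by
    simp only [US, Finset.sum_range_succ]
    linarith [up_nonneg hu ht k ω]

theorem int_bb (hadapt_a : Adapted ℱ a) (hadapt_t : Adapted ℱ t)
    (hint_a : ∀ k, Integrable (a k) μ) (ht : ∀ k ω, 0 ≤ t k ω) (k : ℕ) :
    Integrable (bb a t k) μ := by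
  refine Integrable.mono' (hint_a k).abs
    (((bb_sm hadapt_a hadapt_t k).mono (ℱ.le k)).aestronglyMeasurable)
    (Filter.Eventually.of_forall fun ω => ?_)
  have h1 : (0:ℝ) ≤ (P t k ω)⁻¹ := inv_nonneg.2 (P_pos ht k ω).le
  have h2 : (P t k ω)⁻¹ ≤ 1 := Pinv_le_one ht k ω
  simp only [bb, Real.norm_eq_abs, abs_mul, abs_of_nonneg h1]
  nlinarith [abs_nonneg (a k ω)]

theorem int_up (hadapt_u : Adapted ℱ u) (hadapt_t : Adapted ℱ t)
    (hint_u : ∀ k, Integrable (u k) μ) (ht : ∀ k ω, 0 ≤ t k ω) (k : ℕ) :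
    Integrable (up u t k) μ := by
  refine Integrable.mono' (hint_u k).abs
    (((up_sm hadapt_u hadapt_t k).mono (ℱ.le k)).aestronglyMeasurable)
    (Filter.Eventually.of_forall fun ω => ?_)
  have h1 : (0:ℝ) ≤ (P t (k+1) ω)⁻¹ := inv_nonneg.2 (P_pos ht (k+1) ω).le
  have h2 : (P t (k+1) ω)⁻¹ ≤ 1 := Pinv_le_one ht (k+1) ω
  simp only [up, Real.norm_eq_abs, abs_mul, abs_of_nonneg h1]
  nlinarith [abs_nonneg (u k ω)]

theorem int_US (hadapt_u : Adapted ℱ u) (hadapt_t : Adapted ℱ t)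
    (hint_u : ∀ k, Integrable (u k) μ) (ht : ∀ k ω, 0 ≤ t k ω) (k : ℕ) :
    Integrable (US u t k) μ := by
  have : US u t k = fun ω => ∑ j ∈ Finset.range k, up u t j ω := rfl
  rw [this]
  exact integrable_finset_sum _ fun j _ => int_up hadapt_u hadapt_t hint_u ht j

theorem int_Z (hadapt_a : Adapted ℱ a) (hadapt_u : Adapted ℱ u) (hadapt_d : Adapted ℱ dd)
    (hadapt_t : Adapted ℱ t) (hint_a : ∀ k, Integrable (a k) μ)
    (hint_u : ∀ k, Integrable (u k) μ) (hint_d : ∀ k, Integrable (dd k) μ)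
    (ht : ∀ k ω, 0 ≤ t k ω) (k : ℕ) : Integrable (Z a u dd t k) μ := by
  have : Z a u dd t k = fun ω => bb a t k ω + US u t k ω - US dd t k ω := rfl
  rw [this]
  exact ((int_bb hadapt_a hadapt_t hint_a ht k).add
    (int_US hadapt_u hadapt_t hint_u ht k)).sub (int_US hadapt_d hadapt_t hint_d ht k)

end meas


section Yfacts

variable {m0 : MeasurableSpace Ω} {ℱ : Filtration ℕ m0} {μ : Measure Ω}
variable {a u t dd : ℕ → Ω → ℝ}

theorem Y_succ (a u dd t : ℕ → Ω → ℝ) (c k : ℕ) :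
    Y a u dd t c (k + 1) = Y a u dd t c k +
      (Ek dd t c k).indicator (Z a u dd t (k + 1) - Z a u dd t k) := rfl

theorem Y_sm (hadapt_a : Adapted ℱ a) (hadapt_u : Adapted ℱ u) (hadapt_d : Adapted ℱ dd)
    (hadapt_t : Adapted ℱ t) (c : ℕ) : StronglyAdapted ℱ (Y a u dd t c) := by
  intro k
  induction k with
  | zero => exact Z_sm hadapt_a hadapt_u hadapt_d hadapt_t 0
  | succ k ih =>
    rw [Y_succ]
    refine (ih.mono (ℱ.mono k.le_succ)).add (StronglyMeasurable.indicator ?_ ?_)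
    · exact (Z_sm hadapt_a hadapt_u hadapt_d hadapt_t (k + 1)).sub
        ((Z_sm hadapt_a hadapt_u hadapt_d hadapt_t k).mono (ℱ.mono k.le_succ))
    · exact ℱ.mono k.le_succ _ (Ek_meas hadapt_d hadapt_t c k)

theorem Y_int (hadapt_a : Adapted ℱ a) (hadapt_u : Adapted ℱ u) (hadapt_d : Adapted ℱ dd)
    (hadapt_t : Adapted ℱ t) (hint_a : ∀ k, Integrable (a k) μ)
    (hint_u : ∀ k, Integrable (u k) μ) (hint_d : ∀ k, Integrable (dd k) μ)
    (ht : ∀ k ω, 0 ≤ t k ω) (c k : ℕ) : Integrable (Y a u dd t c k) μ := by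
  induction k with
  | zero => exact int_Z hadapt_a hadapt_u hadapt_d hadapt_t hint_a hint_u hint_d ht 0
  | succ k ih =>
    rw [Y_succ]
    refine ih.add (Integrable.indicator ?_ (ℱ.le k _ (Ek_meas hadapt_d hadapt_t c k)))
    exact (int_Z hadapt_a hadapt_u hadapt_d hadapt_t hint_a hint_u hint_d ht (k + 1)).sub
      (int_Z hadapt_a hadapt_u hadapt_d hadapt_t hint_a hint_u hint_d ht k)

/-- The key structural property of the stopped process `Y`. -/
theorem Y_eq (a u dd t : ℕ → Ω → ℝ) (c k : ℕ) (ω : Ω) :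
    ∃ j ≤ k, Y a u dd t c k ω = Z a u dd t j ω ∧
      (∀ i < j, US dd t (i + 1) ω ≤ c) ∧
      ((∀ i < k, US dd t (i + 1) ω ≤ c) → j = k) := by
  induction k with
  | zero => exact ⟨0, le_rfl, rfl, fun i hi => absurd hi (Nat.not_lt_zero i), fun _ => rfl⟩
  | succ k ih =>
    obtain ⟨j, hjk, hY, hQ, hlast⟩ := ih
    by_cases h : ω ∈ Ek dd t c k
    · have hQk : ∀ i < k, US dd t (i + 1) ω ≤ c := fun i hi => h i hi.le
      have hjk' : j = k := hlast hQk
      subst hjk'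
      refine ⟨j + 1, le_rfl, ?_, fun i hi => h i (by omega), fun _ => rfl⟩
      rw [Y_succ, Pi.add_apply, Set.indicator_of_mem h, Pi.sub_apply, hY]
      linarith
    · refine ⟨j, hjk.trans k.le_succ, ?_, hQ, fun hQ' => absurd (fun i hi => hQ' i (by omega)) h⟩
      rw [Y_succ, Pi.add_apply, Set.indicator_of_notMem h, add_zero, hY]

theorem Y_ge (ha : ∀ k ω, 0 ≤ a k ω) (hu : ∀ k ω, 0 ≤ u k ω) (hd : ∀ k ω, 0 ≤ dd k ω)
    (ht : ∀ k ω, 0 ≤ t k ω) (c k : ℕ) (ω : Ω) : -(c : ℝ) ≤ Y a u dd t c k ω := by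
  obtain ⟨j, _, hY, hQ, _⟩ := Y_eq a u dd t c k ω
  have hDS : US dd t j ω ≤ c := by
    cases j with
    | zero => simp [US]
    | succ i => exact hQ i (Nat.lt_succ_self i)
  rw [hY]
  have h1 := bb_nonneg ha ht j ω
  have h2 := US_nonneg hu ht j ω
  simp only [Z]
  linarith

theorem Y_eq_Z (a u dd t : ℕ → Ω → ℝ) (c : ℕ) {ω : Ω}
    (h : ∀ i, US dd t (i + 1) ω ≤ c) (k : ℕ) : Y a u dd t c k ω = Z a u dd t k ω := by
  obtain ⟨j, _, hY, _, hlast⟩ := Y_eq a u dd t c k ω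
  rw [hY, hlast fun i _ => h i]

end Yfacts

theorem rs_aux {Ω : Type*} {m0 : MeasurableSpace Ω} (μ : Measure Ω)
    [IsProbabilityMeasure μ] (ℱ : Filtration ℕ m0)
    (a u t dd : ℕ → Ω → ℝ)
    (ha : ∀ k ω, 0 ≤ a k ω) (hu : ∀ k ω, 0 ≤ u k ω)
    (ht : ∀ k ω, 0 ≤ t k ω) (hd : ∀ k ω, 0 ≤ dd k ω)
    (hadapt_a : Adapted ℱ a) (hadapt_u : Adapted ℱ u)
    (hadapt_t : Adapted ℱ t) (hadapt_d : Adapted ℱ dd)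
    (hint_a : ∀ k, Integrable (a k) μ) (hint_u : ∀ k, Integrable (u k) μ)
    (hint_t : ∀ k, Integrable (t k) μ) (hint_d : ∀ k, Integrable (dd k) μ)
    (hrec : ∀ k, ∀ᵐ ω ∂μ,
      (μ[a (k + 1) | ℱ k]) ω ≤ (1 + t k ω) * a k ω - u k ω + dd k ω)
    (hts : ∀ᵐ ω ∂μ, Summable fun k => t k ω)
    (hds : ∀ᵐ ω ∂μ, Summable fun k => dd k ω) :
    (∀ᵐ ω ∂μ, Summable fun k => u k ω) ∧
      ∀ᵐ ω ∂μ, ∃ l : ℝ, 0 ≤ l ∧ Tendsto (fun k => a k ω) atTop (nhds l) := by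
  -- the supermartingale inequality for `Z`
  have hintZ : ∀ k, Integrable (Z a u dd t k) μ :=
    int_Z hadapt_a hadapt_u hadapt_d hadapt_t hint_a hint_u hint_d ht
  have hZ : ∀ k, μ[Z a u dd t (k + 1) | ℱ k] ≤ᵐ[μ] Z a u dd t k := by
    intro k
    set g : Ω → ℝ := fun ω => US u t (k + 1) ω - US dd t (k + 1) ω with hg
    have hgsm : StronglyMeasurable[ℱ k] g :=
      (US_sm hadapt_u hadapt_t le_rfl).sub (US_sm hadapt_d hadapt_t le_rfl)
    have hgint : Integrable g μ :=
      (int_US hadapt_u hadapt_t hint_u ht (k + 1)).sub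
        (int_US hadapt_d hadapt_t hint_d ht (k + 1))
    have hZsplit : Z a u dd t (k + 1) = bb a t (k + 1) + g := by
      funext ω; simp only [Z, hg, Pi.add_apply]; ring
    have hbbint : Integrable (bb a t (k + 1)) μ := int_bb hadapt_a hadapt_t hint_a ht (k + 1)
    have h1 : μ[Z a u dd t (k + 1) | ℱ k] =ᵐ[μ]
        μ[bb a t (k + 1) | ℱ k] + μ[g | ℱ k] := by
      rw [hZsplit]; exact condExp_add hbbint hgint _
    have h2 : μ[g | ℱ k] = g := condExp_of_stronglyMeasurable (ℱ.le k) hgsm hgint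
    have hbbmul : bb a t (k + 1) = (fun ω => (P t (k + 1) ω)⁻¹) * a (k + 1) := rfl
    have h4 : μ[bb a t (k + 1) | ℱ k] =ᵐ[μ]
        (fun ω => (P t (k + 1) ω)⁻¹) * μ[a (k + 1) | ℱ k] := by
      rw [hbbmul]
      exact condExp_mul_of_stronglyMeasurable_left (Pinv_sm hadapt_t le_rfl)
        (hbbmul ▸ hbbint) (hint_a (k + 1))
    filter_upwards [h1, h4, hrec k] with ω hω1 hω4 hωrec
    rw [hω1, Pi.add_apply, h2, hg]
    rw [Pi.mul_apply] at hω4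
    have hPpos : 0 < P t (k + 1) ω := P_pos ht (k + 1) ω
    have hPkpos : 0 < P t k ω := P_pos ht k ω
    have h1t : (0:ℝ) < 1 + t k ω := by linarith [ht k ω]
    have hle : (μ[bb a t (k + 1) | ℱ k]) ω ≤
        (P t (k + 1) ω)⁻¹ * ((1 + t k ω) * a k ω - u k ω + dd k ω) := by
      rw [hω4]
      exact mul_le_mul_of_nonneg_left hωrec (inv_nonneg.2 hPpos.le)
    have hkey : (P t (k + 1) ω)⁻¹ * ((1 + t k ω) * a k ω - u k ω + dd k ω)
        = bb a t k ω - up u t k ω + up dd t k ω := by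
      simp only [bb, up]
      rw [P_succ]
      field_simp
    have hUSu : US u t (k + 1) ω = US u t k ω + up u t k ω := Finset.sum_range_succ _ _
    have hUSd : US dd t (k + 1) ω = US dd t k ω + up dd t k ω := Finset.sum_range_succ _ _
    simp only [Z]
    rw [hkey] at hle
    linarith
  -- each stopped process `Y c` is a supermartingale
  have hintY : ∀ c k, Integrable (Y a u dd t c k) μ := fun c =>
    Y_int hadapt_a hadapt_u hadapt_d hadapt_t hint_a hint_u hint_d ht c
  have hadY : ∀ c, StronglyAdapted ℱ (Y a u dd t c) := fun c =>
    Y_sm hadapt_a hadapt_u hadapt_d hadapt_t c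
  have hsup : ∀ c : ℕ, Supermartingale (Y a u dd t c) ℱ μ := by
    intro c
    refine supermartingale_nat (hadY c) (hintY c) fun k => ?_
    have hdiffint : Integrable (Z a u dd t (k + 1) - Z a u dd t k) μ :=
      (hintZ (k + 1)).sub (hintZ k)
    have hEk : MeasurableSet[ℱ k] (Ek dd t c k) := Ek_meas hadapt_d hadapt_t c k
    have hind : μ[(Ek dd t c k).indicator (Z a u dd t (k + 1) - Z a u dd t k) | ℱ k] =ᵐ[μ]
        (Ek dd t c k).indicator (μ[Z a u dd t (k + 1) - Z a u dd t k | ℱ k]) :=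
      condExp_indicator hdiffint hEk
    have hsub : μ[Z a u dd t (k + 1) - Z a u dd t k | ℱ k] =ᵐ[μ]
        μ[Z a u dd t (k + 1) | ℱ k] - μ[Z a u dd t k | ℱ k] :=
      condExp_sub (hintZ (k + 1)) (hintZ k) _
    have hZk : μ[Z a u dd t k | ℱ k] = Z a u dd t k :=
      condExp_of_stronglyMeasurable (ℱ.le k)
        (Z_sm hadapt_a hadapt_u hadapt_d hadapt_t k) (hintZ k)
    have hYk : μ[Y a u dd t c k | ℱ k] = Y a u dd t c k :=
      condExp_of_stronglyMeasurable (ℱ.le k) (hadY c k) (hintY c k)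
    have hindint : Integrable ((Ek dd t c k).indicator
        (Z a u dd t (k + 1) - Z a u dd t k)) μ :=
      hdiffint.indicator (ℱ.le k _ hEk)
    have hsplit : μ[Y a u dd t c (k + 1) | ℱ k] =ᵐ[μ]
        μ[Y a u dd t c k | ℱ k] +
          μ[(Ek dd t c k).indicator (Z a u dd t (k + 1) - Z a u dd t k) | ℱ k] := by
      rw [Y_succ]; exact condExp_add (hintY c k) hindint _
    have hnonpos : μ[Z a u dd t (k + 1) | ℱ k] - Z a u dd t k ≤ᵐ[μ] 0 := by
      filter_upwards [hZ k] with ω hω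
      simp only [Pi.sub_apply, Pi.zero_apply]
      linarith
    filter_upwards [hsplit, hind, hsub, hnonpos] with ω h1 h2 h3 h4
    rw [h1, Pi.add_apply, hYk, h2]
    have hind0 : (Ek dd t c k).indicator (μ[Z a u dd t (k + 1) - Z a u dd t k | ℱ k]) ω ≤ 0 := by
      by_cases hω : ω ∈ Ek dd t c k
      · rw [Set.indicator_of_mem hω, h3, Pi.sub_apply, hZk]
        simpa using h4
      · rw [Set.indicator_of_notMem hω]
    linarith
  -- each `Y c` converges a.e.
  have hYconv : ∀ᵐ ω ∂μ, ∀ c : ℕ, ∃ L : ℝ,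
      Tendsto (fun k => Y a u dd t c k ω) atTop (nhds L) := by
    rw [ae_all_iff]
    intro c
    -- integrals are monotone decreasing
    have hint0 : ∀ k, ∫ ω, Y a u dd t c k ω ∂μ ≤ ∫ ω, Y a u dd t c 0 ω ∂μ := by
      intro k
      calc ∫ ω, Y a u dd t c k ω ∂μ = ∫ ω, (μ[Y a u dd t c k | ℱ 0]) ω ∂μ :=
            (integral_condExp (ℱ.le 0)).symm
        _ ≤ ∫ ω, Y a u dd t c 0 ω ∂μ :=
            integral_mono_ae integrable_condExp (hintY c 0) ((hsup c).2.1 0 k (Nat.zero_le k))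
    -- L¹ bound
    set R : ℝ≥0∞ := ENNReal.ofReal (∫ ω, Y a u dd t c 0 ω ∂μ + 2 * c) with hR
    have hbdd : ∀ k, eLpNorm (Y a u dd t c k) 1 μ ≤ R := by
      intro k
      have hptw : ∀ ω, ‖Y a u dd t c k ω‖ ≤ Y a u dd t c k ω + 2 * c := by
        intro ω
        have hge := Y_ge ha hu hd ht c k ω
        rw [Real.norm_eq_abs]
        rcases abs_cases (Y a u dd t c k ω) with ⟨h1, _⟩ | ⟨h1, _⟩ <;> rw [h1] <;> linarith
      have habs : ∫ ω, ‖Y a u dd t c k ω‖ ∂μ ≤ ∫ ω, Y a u dd t c 0 ω ∂μ + 2 * c := by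
        calc ∫ ω, ‖Y a u dd t c k ω‖ ∂μ ≤ ∫ ω, (Y a u dd t c k ω + 2 * c) ∂μ :=
              integral_mono (hintY c k).norm ((hintY c k).add (integrable_const _))
                hptw
          _ = ∫ ω, Y a u dd t c k ω ∂μ + 2 * c := by
              rw [integral_add (hintY c k) (integrable_const _), integral_const,
                probReal_univ, one_smul]
          _ ≤ ∫ ω, Y a u dd t c 0 ω ∂μ + 2 * c := by linarith [hint0 k]
      calc eLpNorm (Y a u dd t c k) 1 μ = ENNReal.ofReal (∫ ω, ‖Y a u dd t c k ω‖ ∂μ) := by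
            rw [eLpNorm_one_eq_lintegral_enorm,
              ← ofReal_integral_norm_eq_lintegral_enorm (hintY c k)]
        _ ≤ R := ENNReal.ofReal_le_ofReal habs
    have hbdd' : ∀ k, eLpNorm ((-(Y a u dd t c)) k) 1 μ ≤ R := fun k => by
      rw [Pi.neg_apply, eLpNorm_neg]; exact hbdd k
    have := ((hsup c).neg.exists_ae_tendsto_of_bdd hbdd' : ∀ᵐ ω ∂μ, ∃ L : ℝ,
      Tendsto (fun k => (-(Y a u dd t c)) k ω) atTop (nhds L))
    filter_upwards [this] with ω ⟨L, hL⟩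
    refine ⟨-L, ?_⟩
    have := hL.neg
    simp only [Pi.neg_apply, neg_neg] at this
    exact this
  -- endgame
  suffices H : ∀ᵐ ω ∂μ, (Summable fun k => u k ω) ∧
      ∃ l : ℝ, 0 ≤ l ∧ Tendsto (fun k => a k ω) atTop (nhds l) by
    exact ⟨H.mono fun ω h => h.1, H.mono fun ω h => h.2⟩
  filter_upwards [hYconv, hts, hds] with ω hYc hT hD
  -- summability of the scaled `dd`
  have hd' : Summable fun k => up dd t k ω := by
    refine Summable.of_nonneg_of_le (fun k => up_nonneg hd ht k ω) (fun k => ?_) hD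
    have h1 : (P t (k + 1) ω)⁻¹ ≤ 1 := Pinv_le_one ht (k + 1) ω
    have h2 := hd k ω
    calc up dd t k ω = (P t (k + 1) ω)⁻¹ * dd k ω := rfl
      _ ≤ 1 * dd k ω := mul_le_mul_of_nonneg_right h1 h2
      _ = dd k ω := one_mul _
  obtain ⟨c, hc⟩ := exists_nat_ge (∑' k, up dd t k ω)
  have hQ : ∀ i, US dd t (i + 1) ω ≤ c := fun i =>
    le_trans (hd'.sum_le_tsum _ (fun j _ => up_nonneg hd ht j ω)) hc
  obtain ⟨L, hL⟩ := hYc c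
  have hLZ : Tendsto (fun k => Z a u dd t k ω) atTop (nhds L) :=
    hL.congr fun k => Y_eq_Z a u dd t c hQ k
  have hDtend : Tendsto (fun k => US dd t k ω) atTop (nhds (∑' k, up dd t k ω)) :=
    hd'.hasSum.tendsto_sum_nat
  -- partial sums of scaled `u` are bounded
  have hZD : Tendsto (fun k => Z a u dd t k ω + US dd t k ω) atTop
      (nhds (L + ∑' k, up dd t k ω)) := hLZ.add hDtend
  obtain ⟨C, hC⟩ := hZD.bddAbove_range
  have hUle : ∀ k, ∑ j ∈ Finset.range k, up u t j ω ≤ C := by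
    intro k
    have hmem := hC (Set.mem_range_self k)
    have h1 := bb_nonneg ha ht k ω
    simp only [Z] at hmem
    calc ∑ j ∈ Finset.range k, up u t j ω = US u t k ω := rfl
      _ ≤ C := by linarith
  have hu' : Summable fun k => up u t k ω :=
    summable_of_sum_range_le (fun k => up_nonneg hu ht k ω) hUle
  -- summability of `u`
  constructor
  · refine Summable.of_nonneg_of_le (fun k => hu k ω) (fun k => ?_) (hu'.mul_left
      (Real.exp (∑' j, t j ω)))
    have hPne : P t (k + 1) ω ≠ 0 := (P_pos ht (k + 1) ω).ne'
    have hue : u k ω = P t (k + 1) ω * up u t k ω := by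
      rw [up, ← mul_assoc, mul_inv_cancel₀ hPne, one_mul]
    rw [hue]
    exact mul_le_mul_of_nonneg_right (P_le_exp ht hT (k + 1)) (up_nonneg hu ht k ω)
  -- convergence of `a`
  · have hUtend : Tendsto (fun k => US u t k ω) atTop (nhds (∑' k, up u t k ω)) :=
      hu'.hasSum.tendsto_sum_nat
    have hbbtend : Tendsto (fun k => bb a t k ω) atTop
        (nhds (L - ∑' k, up u t k ω + ∑' k, up dd t k ω)) := by
      refine ((hLZ.sub hUtend).add hDtend).congr fun k => ?_
      simp only [Z]; ring
    have hPbdd : BddAbove (Set.range fun k => P t k ω) := by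
      refine ⟨Real.exp (∑' j, t j ω), ?_⟩
      rintro x ⟨k, rfl⟩
      exact P_le_exp ht hT k
    have hPtend : Tendsto (fun k => P t k ω) atTop (nhds (⨆ k, P t k ω)) :=
      tendsto_atTop_ciSup (P_mono ht ω) hPbdd
    have hPL1 : (1:ℝ) ≤ ⨆ k, P t k ω := by
      have := le_ciSup hPbdd 0
      simpa [P] using this
    have hl0 : 0 ≤ L - ∑' k, up u t k ω + ∑' k, up dd t k ω :=
      ge_of_tendsto' hbbtend fun k => bb_nonneg ha ht k ω
    refine ⟨(⨆ k, P t k ω) * (L - ∑' k, up u t k ω + ∑' k, up dd t k ω),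
      mul_nonneg (by linarith) hl0, ?_⟩
    refine (hPtend.mul hbbtend).congr fun k => ?_
    rw [bb, ← mul_assoc, mul_inv_cancel₀ (P_pos ht k ω).ne', one_mul]

end RobbinsSiegmundAux

open RobbinsSiegmundAux in
/-- Robbins–Siegmund almost-supermartingale convergence lemma. -/
theorem robbins_siegmund {Ω : Type*} {m0 : MeasurableSpace Ω} (μ : Measure Ω)
    [IsProbabilityMeasure μ] (ℱ : Filtration ℕ m0)
    (a u t dd : ℕ → Ω → ℝ)
    (ha : ∀ k, 0 ≤ᵐ[μ] a k) (hu : ∀ k, 0 ≤ᵐ[μ] u k)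
    (ht : ∀ k, 0 ≤ᵐ[μ] t k) (hd : ∀ k, 0 ≤ᵐ[μ] dd k)
    (hadapt_a : Adapted ℱ a) (hadapt_u : Adapted ℱ u)
    (hadapt_t : Adapted ℱ t) (hadapt_d : Adapted ℱ dd)
    (hint_a : ∀ k, Integrable (a k) μ) (hint_u : ∀ k, Integrable (u k) μ)
    (hint_t : ∀ k, Integrable (t k) μ) (hint_d : ∀ k, Integrable (dd k) μ)
    (hrec : ∀ k, ∀ᵐ ω ∂μ,
      (μ[a (k + 1) | ℱ k]) ω ≤ (1 + t k ω) * a k ω - u k ω + dd k ω)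
    (hts : ∀ᵐ ω ∂μ, Summable fun k => t k ω)
    (hds : ∀ᵐ ω ∂μ, Summable fun k => dd k ω) :
    (∀ᵐ ω ∂μ, Summable fun k => u k ω) ∧
      ∀ᵐ ω ∂μ, ∃ l : ℝ, 0 ≤ l ∧ Tendsto (fun k => a k ω) atTop (nhds l) := by
  classical
  -- truncate to pointwise nonnegative versions
  set A : ℕ → Ω → ℝ := fun k ω => max (a k ω) 0 with hA
  set U : ℕ → Ω → ℝ := fun k ω => max (u k ω) 0 with hU
  set T : ℕ → Ω → ℝ := fun k ω => max (t k ω) 0 with hT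
  set D : ℕ → Ω → ℝ := fun k ω => max (dd k ω) 0 with hD
  have hae_a : ∀ k, A k =ᵐ[μ] a k := fun k => (ha k).mono fun ω hω => max_eq_left hω
  have hae_u : ∀ k, U k =ᵐ[μ] u k := fun k => (hu k).mono fun ω hω => max_eq_left hω
  have hae_t : ∀ k, T k =ᵐ[μ] t k := fun k => (ht k).mono fun ω hω => max_eq_left hω
  have hae_d : ∀ k, D k =ᵐ[μ] dd k := fun k => (hd k).mono fun ω hω => max_eq_left hω
  have hsm : ∀ (f : ℕ → Ω → ℝ), Adapted ℱ f → Adapted ℱ (fun k ω => max (f k ω) 0) :=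
    fun f hf k => (hf k).max measurable_const
  have hint : ∀ (f : ℕ → Ω → ℝ), (∀ k, Integrable (f k) μ) →
      ∀ k, Integrable (fun ω => max (f k ω) 0) μ := fun f hf k => (hf k).pos_part
  have hrec' : ∀ k, ∀ᵐ ω ∂μ,
      (μ[A (k + 1) | ℱ k]) ω ≤ (1 + T k ω) * A k ω - U k ω + D k ω := by
    intro k
    have h1 : μ[A (k + 1) | ℱ k] =ᵐ[μ] μ[a (k + 1) | ℱ k] := condExp_congr_ae (hae_a (k + 1))
    filter_upwards [h1, hrec k, hae_a k, hae_u k, hae_t k, hae_d k]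
      with ω h1ω h2ω h3ω h4ω h5ω h6ω
    rw [h1ω, h3ω, h4ω, h5ω, h6ω]
    exact h2ω
  have hall_t : ∀ᵐ ω ∂μ, ∀ k, T k ω = t k ω := ae_all_iff.2 hae_t
  have hall_u : ∀ᵐ ω ∂μ, ∀ k, U k ω = u k ω := ae_all_iff.2 hae_u
  have hall_a : ∀ᵐ ω ∂μ, ∀ k, A k ω = a k ω := ae_all_iff.2 hae_a
  have hall_d : ∀ᵐ ω ∂μ, ∀ k, D k ω = dd k ω := ae_all_iff.2 hae_d
  have hts' : ∀ᵐ ω ∂μ, Summable fun k => T k ω := by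
    filter_upwards [hts, hall_t] with ω h1 h2
    exact h1.congr fun k => (h2 k).symm
  have hds' : ∀ᵐ ω ∂μ, Summable fun k => D k ω := by
    filter_upwards [hds, hall_d] with ω h1 h2
    exact h1.congr fun k => (h2 k).symm
  obtain ⟨hsum, hconv⟩ := rs_aux μ ℱ A U T D
    (fun k ω => le_max_right _ _) (fun k ω => le_max_right _ _)
    (fun k ω => le_max_right _ _) (fun k ω => le_max_right _ _)
    (hsm a hadapt_a) (hsm u hadapt_u) (hsm t hadapt_t) (hsm dd hadapt_d)
    (hint a hint_a) (hint u hint_u) (hint t hint_t) (hint dd hint_d)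
    hrec' hts' hds'
  constructor
  · filter_upwards [hsum, hall_u] with ω h1 h2
    exact h1.congr fun k => h2 k
  · filter_upwards [hconv, hall_a] with ω h1 h2
    obtain ⟨l, hl0, hl⟩ := h1
    exact ⟨l, hl0, hl.congr fun k => h2 k⟩
end
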